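/- arXiv:1804.07833 — 5 statements merged into one kernel-verified Lean document; each statement's English description precedes it below -/
import Mathlib

section
/- Fix p > 0, σ > 0 and β ∈ (0,1). Let u ~ Gamma(p, σ), ζ ~ Beta(pβ, p(1-β)) and w ~ Gamma(p(1-β), σ) be independent, and set v = ζu + w. Then the joint law of (u, v) on ℝ² is symmetric, i.e., (u, v) has the same law as (v, u). -/
/-!
Write `π` for the Gamma(p, σ) density and `q(a, ·)` for the density of `ζ a + w`. Then `(u, v)`
has density `π(a) q(a, v)` on `ℝ²`, and substituting `x = ζ a` gives
`π(a) q(a, v) = ∫ f(a, v, x) dx` with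
`f(a, v, x) ∝ x^(pβ-1) (a-x)^(p(1-β)-1) (v-x)^(p(1-β)-1) e^((x-a-v)/σ)` on `0 < x < min a v`:
all powers of `a` cancel because `pβ + p(1-β) = p`. As `f` is symmetric in `a` and `v`, so is the
joint density, and the law of `(u, v)` is invariant under the swap.
-/

open MeasureTheory ProbabilityTheory

/-- The gamma distribution with shape `p > 0` and scale `σ > 0`. -/
noncomputable def gammaM (p σ : ℝ) : Measure ℝ :=
  MeasureTheory.volume.withDensity (fun t => ENNReal.ofReal
    (if 0 < t then (σ * Real.Gamma p)⁻¹ * (t / σ) ^ (p - 1) * Real.exp (-t / σ) else 0))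

/-- The beta distribution on `(0,1)` with parameters `a, b > 0`. -/
noncomputable def betaM (a b : ℝ) : Measure ℝ :=
  MeasureTheory.volume.withDensity (fun t => ENNReal.ofReal
    (if 0 < t ∧ t < 1 then
      Real.Gamma (a + b) / (Real.Gamma a * Real.Gamma b) * t ^ (a - 1) * (1 - t) ^ (b - 1)
    else 0))

open scoped ENNReal

/-- The density of `a * Z + W` for independent `Z`, `W` with densities `gz`, `gw`
(when `a ≠ 0`). -/
noncomputable def mulAddDensity (gz gw : ℝ → ℝ≥0∞) (a v : ℝ) : ℝ≥0∞ :=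
  ENNReal.ofReal |a⁻¹| * ∫⁻ x, gz (x / a) * gw (v - x)

@[fun_prop]
lemma measurable_mulAddDensity {gz gw : ℝ → ℝ≥0∞} (hgz : Measurable gz)
    (hgw : Measurable gw) : Measurable fun y : ℝ × ℝ => mulAddDensity gz gw y.1 y.2 := by
  unfold mulAddDensity
  fun_prop

lemma lintegral_mul_lintegral_mul_add {gz gw φ : ℝ → ℝ≥0∞} (hgz : Measurable gz)
    (hgw : Measurable gw) (hφ : Measurable φ) {a : ℝ} (ha : a ≠ 0) :
    ∫⁻ z, gz z * ∫⁻ c, gw c * φ (z * a + c) =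
      ∫⁻ v, mulAddDensity gz gw a v * φ v := by
  have htranslate (b : ℝ) : ∫⁻ c, gw c * φ (b + c) = ∫⁻ v, gw (v - b) * φ v := by
    simpa only [add_sub_cancel_left] using
      lintegral_add_left_eq_self (fun v => gw (v - b) * φ v) b
  have hscale : ∫⁻ z, gz z * ∫⁻ v, gw (v - z * a) * φ v =
      ENNReal.ofReal |a⁻¹| * ∫⁻ x, gz (x / a) * ∫⁻ v, gw (v - x) * φ v := by
    rw [← smul_eq_mul, ← lintegral_smul_measure, ← Real.map_volume_mul_right ha,
      lintegral_map (by fun_prop) (by fun_prop)]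
    simp only [mul_div_cancel_right₀ _ ha]
  have hswap : ∫⁻ x, gz (x / a) * ∫⁻ v, gw (v - x) * φ v =
      ∫⁻ v, (∫⁻ x, gz (x / a) * gw (v - x)) * φ v := calc
    _ = ∫⁻ x, ∫⁻ v, gz (x / a) * (gw (v - x) * φ v) :=
      lintegral_congr fun x => (lintegral_const_mul _ (by fun_prop)).symm
    _ = ∫⁻ v, ∫⁻ x, gz (x / a) * gw (v - x) * φ v := by
      simp_rw [mul_assoc]
      exact lintegral_lintegral_swap (by fun_prop)
    _ = _ := lintegral_congr fun v => lintegral_mul_const _ (by fun_prop)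
  simp_rw [htranslate]
  rw [hscale, hswap, ← lintegral_const_mul' _ _ ENNReal.ofReal_ne_top]
  simp only [mulAddDensity, mul_assoc]

lemma map_mul_add_prod_withDensity {gu gz gw : ℝ → ℝ≥0∞} (hgu : Measurable gu)
    (hgz : Measurable gz) (hgw : Measurable gw) :
    (((volume.withDensity gu).prod (volume.withDensity gz)).prod (volume.withDensity gw)).map
        (fun t => (t.1.1, t.1.2 * t.1.1 + t.2)) =
      volume.withDensity fun y : ℝ × ℝ => gu y.1 * mulAddDensity gz gw y.1 y.2 := by
  refine Measure.ext_of_lintegral _ fun f hf => ?_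
  rw [lintegral_map hf (by fun_prop), prod_withDensity hgu hgz,
    prod_withDensity (by fun_prop) hgw,
    lintegral_withDensity_eq_lintegral_mul _ (by fun_prop) (by fun_prop),
    lintegral_withDensity_eq_lintegral_mul _ (by fun_prop) hf, Measure.volume_eq_prod,
    lintegral_prod _ (by fun_prop), lintegral_prod _ (by fun_prop), lintegral_prod _ (by fun_prop)]
  have hne : ∀ᵐ a : ℝ, a ≠ 0 := by simp [ae_iff, measure_singleton]
  refine lintegral_congr_ae (hne.mono fun a ha => ?_)
  simp only [Pi.mul_apply, mul_assoc]
  have hinner (z : ℝ) : ∫⁻ c, gu a * (gz z * (gw c * f (a, z * a + c))) =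
      gu a * (gz z * ∫⁻ c, gw c * f (a, z * a + c)) := by
    rw [lintegral_const_mul _ (by fun_prop), lintegral_const_mul _ (by fun_prop)]
  rw [lintegral_congr hinner, lintegral_const_mul _ (by fun_prop),
    lintegral_const_mul _ (by fun_prop),
    lintegral_mul_lintegral_mul_add (φ := fun v => f (a, v)) hgz hgw (by fun_prop) ha]

lemma map_swap_withDensity_of_symm {α : Type*} [MeasurableSpace α] {μ : Measure α} [SFinite μ]
    {K : α × α → ℝ≥0∞} (hK : ∀ y, K y.swap = K y) :
    ((μ.prod μ).withDensity K).map Prod.swap = (μ.prod μ).withDensity K := by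
  ext s hs
  rw [Measure.map_apply measurable_swap hs, withDensity_apply _ (measurable_swap hs),
    withDensity_apply _ hs]
  calc ∫⁻ y in Prod.swap ⁻¹' s, K y ∂μ.prod μ
      = ∫⁻ y in Prod.swap ⁻¹' s, K y.swap ∂μ.prod μ := by simp only [hK]
    _ = ∫⁻ y in s, K y ∂μ.prod μ :=
      Measure.measurePreserving_swap.setLIntegral_comp_preimage_emb
        MeasurableEquiv.prodComm.measurableEmbedding K s

lemma map_prodMk_prodMk_eq_of_iIndepFun {Ω E : Type*} [MeasurableSpace Ω] [MeasurableSpace E]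
    {P : Measure Ω} [IsFiniteMeasure P] {X Y Z : Ω → E} (hX : Measurable X) (hY : Measurable Y)
    (hZ : Measurable Z) (hind : iIndepFun ![X, Y, Z] P) :
    P.map (fun ω => ((X ω, Y ω), Z ω)) = ((P.map X).prod (P.map Y)).prod (P.map Z) := by
  have hmeas : ∀ i, Measurable (![X, Y, Z] i) := fun i => by fin_cases i <;> assumption
  rw [(indepFun_iff_map_prod_eq_prod_map_map (hX.prodMk hY).aemeasurable hZ.aemeasurable).mp
      (hind.indepFun_prodMk hmeas 0 1 2 (by decide) (by decide)),
    (indepFun_iff_map_prod_eq_prod_map_map hX.aemeasurable hY.aemeasurable).mp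
      (hind.indepFun (show (0 : Fin 3) ≠ 1 by decide))]

noncomputable def gammaDensity (p σ t : ℝ) : ℝ≥0∞ := ENNReal.ofReal
  (if 0 < t then (σ * Real.Gamma p)⁻¹ * (t / σ) ^ (p - 1) * Real.exp (-t / σ) else 0)

noncomputable def betaDensity (a b t : ℝ) : ℝ≥0∞ := ENNReal.ofReal
  (if 0 < t ∧ t < 1 then
    Real.Gamma (a + b) / (Real.Gamma a * Real.Gamma b) * t ^ (a - 1) * (1 - t) ^ (b - 1)
  else 0)

lemma gammaM_eq_withDensity (p σ : ℝ) :
    gammaM p σ = volume.withDensity (gammaDensity p σ) := rfl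

lemma betaM_eq_withDensity (a b : ℝ) :
    betaM a b = volume.withDensity (betaDensity a b) := rfl

@[fun_prop]
lemma measurable_gammaDensity (p σ : ℝ) : Measurable (gammaDensity p σ) :=
  (Measurable.ite measurableSet_Ioi (by fun_prop) measurable_const).ennreal_ofReal

@[fun_prop]
lemma measurable_betaDensity (a b : ℝ) : Measurable (betaDensity a b) :=
  (Measurable.ite (measurableSet_Ioi.inter measurableSet_Iio) (by fun_prop)
    measurable_const).ennreal_ofReal

lemma gammaDensity_of_nonpos (p σ : ℝ) {t : ℝ} (ht : t ≤ 0) : gammaDensity p σ t = 0 := by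
  simp [gammaDensity, ht.not_gt]

lemma rpow_add_sub_one_mul_inv_mul_div_rpow_mul_div_rpow {A y z : ℝ} (hA : 0 < A)
    (hy : 0 ≤ y) (hz : 0 ≤ z) (r s : ℝ) :
    A ^ (r + s - 1) * A⁻¹ * (y / A) ^ (r - 1) * (z / A) ^ (s - 1) =
      y ^ (r - 1) * z ^ (s - 1) := by
  have hsplit : A ^ (r + s - 1) = A ^ (r - 1) * A ^ (s - 1) * A := by
    rw [← Real.rpow_add hA, ← Real.rpow_add_one hA.ne']
    ring_nf
  rw [Real.div_rpow hy hA.le, Real.div_rpow hz hA.le, hsplit]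
  field_simp

/-- The joint density of `(u, ζ u, ζ u + w)` at `(a, x, v)`: the product density of `(u, ζ, w)`
after the change of variables `x = ζ a`, `v = x + w`, whose Jacobian is `a⁻¹`. -/
noncomputable def rcarJointDensity (p σ β a v x : ℝ) : ℝ≥0∞ := ENNReal.ofReal
  (if 0 < x ∧ x < a ∧ x < v then
    (σ * Real.Gamma p)⁻¹ *
      (Real.Gamma (p * β + p * (1 - β)) / (Real.Gamma (p * β) * Real.Gamma (p * (1 - β)))) *
      (σ * Real.Gamma (p * (1 - β)))⁻¹ * σ⁻¹ *
      (x / σ) ^ (p * β - 1) * ((a - x) / σ) ^ (p * (1 - β) - 1) *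
      ((v - x) / σ) ^ (p * (1 - β) - 1) * Real.exp ((x - a - v) / σ)
  else 0)

lemma rcarJointDensity_comm (p σ β a v x : ℝ) :
    rcarJointDensity p σ β a v x = rcarJointDensity p σ β v a x := by
  simp only [rcarJointDensity, and_comm (a := x < a), sub_right_comm x a v,
    mul_right_comm _ (((a - x) / σ) ^ (p * (1 - β) - 1))]

lemma gammaDensity_mul_betaDensity_mul_gammaDensity_eq_rcarJointDensity {p σ β : ℝ}
    (hp : 0 < p) (hσ : 0 < σ) (hβ : β ∈ Set.Ioo (0 : ℝ) 1) {a : ℝ} (ha : 0 < a)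
    (v x : ℝ) :
    gammaDensity p σ a * (ENNReal.ofReal |a⁻¹| *
      (betaDensity (p * β) (p * (1 - β)) (x / a) * gammaDensity (p * (1 - β)) σ (v - x))) =
    rcarJointDensity p σ β a v x := by
  have hsupp : 0 < x / a ∧ x / a < 1 ↔ 0 < x ∧ x < a := by
    rw [div_pos_iff_of_pos_right ha, div_lt_one ha]
  by_cases hxa : 0 < x ∧ x < a
  swap
  · rw [rcarJointDensity, if_neg fun h => hxa ⟨h.1, h.2.1⟩]
    simp [betaDensity, hsupp, hxa]
  by_cases hxv : x < v
  swap
  · rw [rcarJointDensity, if_neg fun h => hxv h.2.2]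
    simp [gammaDensity, hxv]
  obtain ⟨hx, hxa⟩ := hxa
  obtain ⟨hβ0, hβ1⟩ := hβ
  have hq : 0 < p * (1 - β) := mul_pos hp (sub_pos.2 hβ1)
  have hA : 0 < a / σ := div_pos ha hσ
  have hratio : x / a = (x / σ) / (a / σ) := (div_div_div_cancel_right₀ hσ.ne' x a).symm
  have hcompl : 1 - x / a = ((a - x) / σ) / (a / σ) := by field_simp
  have hinv : a⁻¹ = σ⁻¹ * (a / σ)⁻¹ := by field_simp
  have hexp : Real.exp ((x - a - v) / σ) = Real.exp (-a / σ) * Real.exp (-(v - x) / σ) := by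
    rw [← Real.exp_add]; ring_nf
  have key := rpow_add_sub_one_mul_inv_mul_div_rpow_mul_div_rpow hA (div_nonneg hx.le hσ.le)
    (div_nonneg (sub_nonneg.2 hxa.le) hσ.le) (p * β) (p * (1 - β))
  rw [gammaDensity, betaDensity, gammaDensity, rcarJointDensity, if_pos ha,
    if_pos (hsupp.2 ⟨hx, hxa⟩), if_pos (sub_pos.2 hxv), if_pos ⟨hx, hxa, hxv⟩,
    abs_of_pos (inv_pos.2 ha),
    ← ENNReal.ofReal_mul
      (mul_nonneg (by positivity) (Real.rpow_nonneg (sub_nonneg.2 ((div_le_one ha).2 hxa.le)) _)),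
    ← ENNReal.ofReal_mul (by positivity), ← ENNReal.ofReal_mul (by positivity)]
  congr 1
  rw [hcompl, hratio, hinv, hexp, show p - 1 = p * β + p * (1 - β) - 1 by ring]
  linear_combination (σ * Real.Gamma p)⁻¹ *
    (Real.Gamma (p * β + p * (1 - β)) / (Real.Gamma (p * β) * Real.Gamma (p * (1 - β)))) *
    (σ * Real.Gamma (p * (1 - β)))⁻¹ * σ⁻¹ * ((v - x) / σ) ^ (p * (1 - β) - 1) *
    Real.exp (-a / σ) * Real.exp (-(v - x) / σ) * key

/-- The density `q(a, ·)` of the RCAR transition kernel `Q(a, dv) = Law(ζ a + w)`. -/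
noncomputable def rcarTransitionDensity (p σ β : ℝ) : ℝ → ℝ → ℝ≥0∞ :=
  mulAddDensity (betaDensity (p * β) (p * (1 - β))) (gammaDensity (p * (1 - β)) σ)

lemma gammaDensity_mul_rcarTransitionDensity_eq_lintegral {p σ β : ℝ} (hp : 0 < p)
    (hσ : 0 < σ) (hβ : β ∈ Set.Ioo (0 : ℝ) 1) (a v : ℝ) :
    gammaDensity p σ a * rcarTransitionDensity p σ β a v =
      ∫⁻ x, rcarJointDensity p σ β a v x := by
  rcases le_or_gt a 0 with ha | ha
  · have hzero (x : ℝ) : rcarJointDensity p σ β a v x = 0 := by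
      rw [rcarJointDensity, if_neg fun h => (h.1.trans h.2.1).not_ge ha, ENNReal.ofReal_zero]
    simp [gammaDensity_of_nonpos p σ ha, hzero]
  · rw [rcarTransitionDensity, mulAddDensity, ← lintegral_const_mul' _ _ ENNReal.ofReal_ne_top,
      ← lintegral_const_mul' _ _ (by simp [gammaDensity])]
    exact lintegral_congr fun x =>
      gammaDensity_mul_betaDensity_mul_gammaDensity_eq_rcarJointDensity hp hσ hβ ha v x

theorem gammaDensity_mul_rcarTransitionDensity_comm {p σ β : ℝ} (hp : 0 < p) (hσ : 0 < σ)
    (hβ : β ∈ Set.Ioo (0 : ℝ) 1) (a v : ℝ) :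
    gammaDensity p σ a * rcarTransitionDensity p σ β a v =
      gammaDensity p σ v * rcarTransitionDensity p σ β v a := by
  simp only [gammaDensity_mul_rcarTransitionDensity_eq_lintegral hp hσ hβ,
    rcarJointDensity_comm p σ β a v]

/-- Detailed balance of the RCAR kernel with respect to the gamma distribution: if `u ~ Gamma(p, σ)`,
`ζ ~ Beta(pβ, p(1-β))` and `w ~ Gamma(p(1-β), σ)` are independent and
`v = ζ u + w`, then the joint law of `(u, v)` is symmetric: `(u, v)` has the same law as `(v, u)`. -/
theorem rcar_gamma_detailed_balance {Ω : Type*} [MeasurableSpace Ω] (P : Measure Ω)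
    [IsProbabilityMeasure P]
    (p σ β : ℝ) (hp : 0 < p) (hσ : 0 < σ) (hβ : β ∈ Set.Ioo (0:ℝ) 1)
    (u ζ w : Ω → ℝ) (hu : Measurable u) (hζ : Measurable ζ) (hw : Measurable w)
    (hind : iIndepFun ![u, ζ, w] P)
    (hulaw : Measure.map u P = gammaM p σ)
    (hζlaw : Measure.map ζ P = betaM (p * β) (p * (1 - β)))
    (hwlaw : Measure.map w P = gammaM (p * (1 - β)) σ) :
    Measure.map (fun ω => (u ω, ζ ω * u ω + w ω)) P = Measure.map (fun ω => (ζ ω * u ω + w ω, u ω)) P := by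
  have hlaw : P.map (fun ω => (u ω, ζ ω * u ω + w ω)) =
      volume.withDensity fun y : ℝ × ℝ =>
        gammaDensity p σ y.1 * rcarTransitionDensity p σ β y.1 y.2 :=
    calc P.map (fun ω => (u ω, ζ ω * u ω + w ω))
        = (P.map fun ω => ((u ω, ζ ω), w ω)).map
            fun t : (ℝ × ℝ) × ℝ => (t.1.1, t.1.2 * t.1.1 + t.2) := by
          rw [Measure.map_map (by fun_prop) (by fun_prop)]
          rfl
      _ = _ := by
          rw [map_prodMk_prodMk_eq_of_iIndepFun hu hζ hw hind, hulaw, hζlaw, hwlaw,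
            gammaM_eq_withDensity, gammaM_eq_withDensity, betaM_eq_withDensity]
          exact map_mul_add_prod_withDensity (by fun_prop) (by fun_prop) (by fun_prop)
  have hswap : P.map (fun ω => (ζ ω * u ω + w ω, u ω)) =
      (P.map fun ω => (u ω, ζ ω * u ω + w ω)).map Prod.swap := by
    rw [Measure.map_map measurable_swap (by fun_prop)]
    rfl
  rw [hswap, hlaw, Measure.volume_eq_prod,
    map_swap_withDensity_of_symm fun y =>
      gammaDensity_mul_rcarTransitionDensity_comm hp hσ hβ y.2 y.1]
end

section
/- Fix β ∈ (0,1). Let u, w be independent Exp(1) random variables, ζ ~ Bernoulli(1-β) independent of both, and let v = βu + ζw. Then the conditional law of u given v is the law of min{v/β, η/(1-β)} where η ~ Exp(1) is independent of v. -/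
open MeasureTheory ProbabilityTheory

/-- The exponential distribution with scale `σ > 0`. -/
noncomputable def expM (σ : ℝ) : Measure ℝ :=
  MeasureTheory.volume.withDensity (fun t => ENNReal.ofReal
    (if 0 < t then σ⁻¹ * Real.exp (-t / σ) else 0))

/-- The Bernoulli distribution on `ℝ`, taking value `1` with probability `q` and `0` otherwise. -/
noncomputable def bernM (q : ℝ) : Measure ℝ :=
  ENNReal.ofReal (1 - q) • Measure.dirac (0 : ℝ) + ENNReal.ofReal q • Measure.dirac (1 : ℝ)

/-!
Both laws on `ℝ × ℝ` are determined by their joint survival function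
`(a, b) ↦ P(· > a, · > b)`. Write `b⁺ = max b 0`. For the reversed pair, the event
`{V > a, min (V/β) (η/(1-β)) > b}` is the rectangle `{V > max a (βb), η > (1-β)b}`, of
probability `exp (-(max a (βb⁺) + (1-β)b⁺))`. For the forward pair, the innovation `ζ w` has
tail `1` below `0` and `(1-β)e^{-t}` at `t ≥ 0`; integrating its tail at `a - βx` against
`e^{-x}` over `x > b⁺` gives the same value, the integrand being `e^{-x}` beyond `x = a/β` and
`(1-β)e^{-a}e^{-(1-β)x}` before it.
-/

open Real Set
open scoped ENNReal

lemma iUnion_Ioi_neg_natCast : ⋃ n : ℕ, Ioi (-(n : ℝ)) = univ :=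
  eq_univ_of_forall fun x => mem_iUnion.2 <| (exists_nat_gt (-x)).imp fun _ hn => by
    rw [mem_Ioi]; linarith

lemma monotone_Ioi_neg_natCast : Monotone fun n : ℕ => Ioi (-(n : ℝ)) :=
  fun _ _ h => Ioi_subset_Ioi (neg_le_neg (Nat.cast_le.2 h))

lemma MeasureTheory.Measure.ext_of_Ioi_prod_Ioi {μ ν : Measure (ℝ × ℝ)} [IsFiniteMeasure μ]
    (h : ∀ a b : ℝ, μ (Ioi a ×ˢ Ioi b) = ν (Ioi a ×ˢ Ioi b)) : μ = ν := by
  have hspan : IsCountablySpanning (range (Ioi : ℝ → Set ℝ)) :=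
    ⟨_, fun n => mem_range_self _, iUnion_Ioi_neg_natCast⟩
  refine Measure.ext_of_generateFrom_of_iUnion _
    (fun n : ℕ => Ioi (-(n : ℝ)) ×ˢ Ioi (-(n : ℝ))) ?_ (isPiSystem_Ioi.prod isPiSystem_Ioi)
    ?_
    (fun n => mem_image2_of_mem (mem_range_self _) (mem_range_self _))
    (fun _ => measure_ne_top _ _) ?_
  · rw [← generateFrom_prod_eq hspan hspan, ← borel_eq_generateFrom_Ioi]
  · rw [iUnion_prod_of_monotone monotone_Ioi_neg_natCast monotone_Ioi_neg_natCast,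
      iUnion_Ioi_neg_natCast, univ_prod_univ]
  · rintro _ ⟨_, ⟨a, rfl⟩, _, ⟨b, rfl⟩, rfl⟩
    exact h a b

lemma expM_one_eq :
    expM 1 = (volume.restrict (Ioi 0)).withDensity fun x => ENNReal.ofReal (exp (-x)) := by
  rw [expM, ← withDensity_indicator measurableSet_Ioi]
  congr with t
  by_cases h : 0 < t <;> simp [h]

lemma expM_one_apply {s : Set ℝ} (hs : MeasurableSet s) :
    expM 1 s = ∫⁻ x in s ∩ Ioi 0, ENNReal.ofReal (exp (-x)) := by
  rw [expM_one_eq, withDensity_apply _ hs, Measure.restrict_restrict hs]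

lemma setLIntegral_expM_one {f : ℝ → ℝ≥0∞} (hf : Measurable f) {s : Set ℝ}
    (hs : MeasurableSet s) :
    ∫⁻ x in s, f x ∂expM 1 = ∫⁻ x in s ∩ Ioi 0, ENNReal.ofReal (exp (-x)) * f x := by
  rw [expM_one_eq, setLIntegral_withDensity_eq_setLIntegral_mul _ (by fun_prop) hf hs,
    Measure.restrict_restrict hs]
  rfl

lemma lintegral_Ioi_ofReal_exp_neg (c : ℝ) :
    ∫⁻ x in Ioi c, ENNReal.ofReal (exp (-x)) = ENNReal.ofReal (exp (-c)) := by
  rw [← ofReal_integral_eq_lintegral_ofReal (integrableOn_exp_neg_Ioi c)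
    (ae_of_all _ fun _ => (exp_pos _).le), integral_exp_neg_Ioi]

lemma expM_one_Ioi (c : ℝ) : expM 1 (Ioi c) = ENNReal.ofReal (exp (-max c 0)) := by
  rw [expM_one_apply measurableSet_Ioi, Ioi_inter_Ioi, lintegral_Ioi_ofReal_exp_neg]

instance : IsProbabilityMeasure (expM 1) :=
  ⟨by rw [expM_one_apply MeasurableSet.univ, univ_inter, lintegral_Ioi_ofReal_exp_neg, neg_zero,
    exp_zero, ENNReal.ofReal_one]⟩

lemma map_mul_bernM_prod (q : ℝ) (μ : Measure ℝ) [IsProbabilityMeasure μ] :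
    ((bernM q).prod μ).map (fun p => p.1 * p.2) =
      ENNReal.ofReal (1 - q) • Measure.dirac 0 + ENNReal.ofReal q • μ := by
  rw [bernM, Measure.add_prod, Measure.prod_smul_left, Measure.prod_smul_left, Measure.dirac_prod,
    Measure.dirac_prod, Measure.map_add _ _ (by fun_prop), Measure.map_smul, Measure.map_smul,
    Measure.map_map (by fun_prop) (by fun_prop), Measure.map_map (by fun_prop) (by fun_prop)]
  simp [Function.comp_def, Measure.map_const]

lemma map_mul_of_indepFun_bernM {Ω : Type*} [MeasurableSpace Ω] {P : Measure Ω}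
    [IsProbabilityMeasure P] {ζ w : Ω → ℝ} (hζ : Measurable ζ) (hw : Measurable w)
    (hind : IndepFun ζ w P) {q : ℝ} (hζlaw : P.map ζ = bernM q) {μ : Measure ℝ}
    [IsProbabilityMeasure μ] (hwlaw : P.map w = μ) :
    P.map (fun ω => ζ ω * w ω) =
      ENNReal.ofReal (1 - q) • Measure.dirac 0 + ENNReal.ofReal q • μ := by
  rw [← map_mul_bernM_prod, ← hζlaw, ← hwlaw,
    ← (indepFun_iff_map_prod_eq_prod_map_map hζ.aemeasurable hw.aemeasurable).1 hind,
    Measure.map_map (by fun_prop) (hζ.prodMk hw)]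
  rfl

def arStep (β : ℝ) (p : ℝ × ℝ) : ℝ × ℝ := (β * p.1 + p.2, p.1)

noncomputable def arReversal (β : ℝ) (p : ℝ × ℝ) : ℝ × ℝ :=
  (p.1, min (p.1 / β) (p.2 / (1 - β)))

/-- The law of the innovation `ζ w` in the step `v = β u + ζ w`. -/
noncomputable def earInnov (β : ℝ) : Measure ℝ :=
  ENNReal.ofReal β • Measure.dirac 0 + ENNReal.ofReal (1 - β) • expM 1

noncomputable def earInnovTail (β t : ℝ) : ℝ := if t < 0 then 1 else (1 - β) * exp (-t)

lemma measurable_arStep (β : ℝ) : Measurable (arStep β) := by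
  unfold arStep; fun_prop

lemma measurable_arReversal (β : ℝ) : Measurable (arReversal β) := by
  unfold arReversal; fun_prop

@[fun_prop]
lemma measurable_earInnovTail (β : ℝ) : Measurable (earInnovTail β) :=
  Measurable.ite measurableSet_Iio measurable_const (by fun_prop)

lemma earInnovTail_nonneg {β : ℝ} (hβ : β ≤ 1) (t : ℝ) : 0 ≤ earInnovTail β t := by
  unfold earInnovTail; split_ifs <;> positivity

lemma earInnovTail_le_one {β : ℝ} (hβ : 0 ≤ β) (t : ℝ) : earInnovTail β t ≤ 1 := by
  unfold earInnovTail
  split_ifs with ht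
  · rfl
  · exact mul_le_one₀ (by linarith) (exp_pos _).le (exp_le_one_iff.2 (by linarith))

lemma earInnov_Ioi {β : ℝ} (hβ0 : 0 ≤ β) (hβ1 : β ≤ 1) (t : ℝ) :
    earInnov β (Ioi t) = ENNReal.ofReal (earInnovTail β t) := by
  by_cases ht : t < 0
  · simp [earInnov, earInnovTail, expM_one_Ioi, ht, ht.le,
      ← ENNReal.ofReal_add hβ0 (sub_nonneg.2 hβ1)]
  · simp [earInnov, earInnovTail, expM_one_Ioi, ht, not_lt.1 ht,
      ENNReal.ofReal_mul (sub_nonneg.2 hβ1)]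

instance {β : ℝ} : SFinite (earInnov β) := by
  unfold earInnov; infer_instance

lemma prod_preimage_arStep_Ioi_prod_Ioi (β : ℝ) (μ ν : Measure ℝ) [SFinite ν] (a b : ℝ) :
    (μ.prod ν) (arStep β ⁻¹' (Ioi a ×ˢ Ioi b)) =
      ∫⁻ x in Ioi b, ν (Ioi (a - β * x)) ∂μ := by
  rw [Measure.prod_apply (measurable_arStep β (measurableSet_Ioi.prod measurableSet_Ioi)),
    ← lintegral_indicator measurableSet_Ioi]
  congr with x
  by_cases hx : b < x
  · have hslice : Prod.mk x ⁻¹' (arStep β ⁻¹' (Ioi a ×ˢ Ioi b)) = Ioi (a - β * x) := by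
      ext y; simp [arStep, hx, sub_lt_iff_lt_add']
    rw [hslice, indicator_of_mem (mem_Ioi.2 hx)]
  · have hslice : Prod.mk x ⁻¹' (arStep β ⁻¹' (Ioi a ×ˢ Ioi b)) = ∅ := by
      ext y; simp [arStep, hx]
    rw [hslice, indicator_of_notMem (notMem_Ioi.2 (not_lt.1 hx)), measure_empty]

lemma arReversal_preimage_Ioi_prod_Ioi {β : ℝ} (hβ0 : 0 < β) (hβ1 : β < 1) (a b : ℝ) :
    arReversal β ⁻¹' (Ioi a ×ˢ Ioi b) = Ioi (max a (β * b)) ×ˢ Ioi ((1 - β) * b) := by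
  ext p
  simp only [arReversal, mem_preimage, mem_prod, mem_Ioi, lt_min_iff, max_lt_iff,
    lt_div_iff₀ hβ0, lt_div_iff₀ (sub_pos.2 hβ1), mul_comm b]
  tauto

lemma integrableOn_exp_neg_mul_earInnovTail {β : ℝ} (hβ0 : 0 ≤ β) (hβ1 : β ≤ 1)
    (a m : ℝ) :
    IntegrableOn (fun x => exp (-x) * earInnovTail β (a - β * x)) (Ioi m) := by
  refine (integrableOn_exp_neg_Ioi m).mono' ?_ (ae_of_all _ fun x => ?_)
  · exact Measurable.aestronglyMeasurable (by fun_prop)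
  · rw [norm_mul, norm_of_nonneg (exp_pos _).le, norm_of_nonneg (earInnovTail_nonneg hβ1 _)]
    exact mul_le_of_le_one_right (exp_pos _).le (earInnovTail_le_one hβ0 _)

lemma integral_Ioi_exp_neg_mul_earInnovTail {β : ℝ} (hβ0 : 0 < β) (hβ1 : β < 1) (a m : ℝ) :
    ∫ x in Ioi m, exp (-x) * earInnovTail β (a - β * x) =
      exp (-(max a (β * m) + (1 - β) * m)) := by
  set c := max m (a / β)
  have hmc : m ≤ c := le_max_left _ _
  have hint := integrableOn_exp_neg_mul_earInnovTail hβ0.le hβ1.le a m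
  have htail : ∫ x in Ioi c, exp (-x) * earInnovTail β (a - β * x) = exp (-c) := by
    rw [← integral_exp_neg_Ioi c]
    refine setIntegral_congr_fun measurableSet_Ioi fun x hx => ?_
    have hax : a - β * x < 0 := by
      have := (div_lt_iff₀' hβ0).1 ((le_max_right m _).trans_lt hx)
      linarith
    simp [earInnovTail, hax]
  have hbody : ∫ x in Ioc m c, exp (-x) * earInnovTail β (a - β * x) =
      exp (-a) * (exp ((β - 1) * m) - exp ((β - 1) * c)) := by
    have hcongr : EqOn (fun x => exp (-x) * earInnovTail β (a - β * x))
        (fun x => (1 - β) * exp (-a) * exp ((β - 1) * x)) (Ioc m c) := by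
      intro x hx
      have hxa : x ≤ a / β := (le_max_iff.1 hx.2).resolve_left (not_le.2 hx.1)
      have hax : ¬ a - β * x < 0 := by
        have := (le_div_iff₀' hβ0).1 hxa
        linarith
      simp only [earInnovTail, hax, if_false]
      rw [mul_left_comm, ← exp_add, mul_assoc, ← exp_add]
      ring_nf
    rw [setIntegral_congr_fun measurableSet_Ioc hcongr, integral_const_mul, ← Ioi_sdiff_Ioi,
      setIntegral_sdiff measurableSet_Ioi (integrableOn_exp_mul_Ioi (by linarith) m)
        (Ioi_subset_Ioi hmc), integral_exp_mul_Ioi (by linarith),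
      integral_exp_mul_Ioi (by linarith)]
    field_simp [(sub_neg.2 hβ1).ne]
    ring
  rw [← Ioc_union_Ioi_eq_Ioi hmc, setIntegral_union (Ioc_disjoint_Ioi le_rfl) measurableSet_Ioi
    (hint.mono_set Ioc_subset_Ioi_self) (hint.mono_set (Ioi_subset_Ioi hmc)), hbody, htail]
  rcases le_or_gt a (β * m) with ham | ham
  · have hcm : c = m := max_eq_left ((div_le_iff₀' hβ0).2 ham)
    rw [hcm, max_eq_right ham, sub_self, mul_zero, zero_add]
    ring_nf
  · have hca : c = a / β := max_eq_right ((lt_div_iff₀' hβ0).2 ham).le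
    have hexp : exp (-a) * exp ((β - 1) * c) = exp (-c) := by
      rw [← exp_add, hca]
      field_simp
      ring_nf
    rw [max_eq_left ham.le, mul_sub, hexp, sub_add_cancel, ← exp_add]
    ring_nf

lemma prod_earInnov_preimage_arStep {β : ℝ} (hβ0 : 0 < β) (hβ1 : β < 1) (a b : ℝ) :
    ((expM 1).prod (earInnov β)) (arStep β ⁻¹' (Ioi a ×ˢ Ioi b)) =
      ENNReal.ofReal (exp (-(max a (β * max b 0) + (1 - β) * max b 0))) := by
  have htail : Measurable fun x => ENNReal.ofReal (earInnovTail β (a - β * x)) := by fun_prop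
  simp_rw [prod_preimage_arStep_Ioi_prod_Ioi, earInnov_Ioi hβ0.le hβ1.le]
  rw [setLIntegral_expM_one htail measurableSet_Ioi, Ioi_inter_Ioi,
    ← integral_Ioi_exp_neg_mul_earInnovTail hβ0 hβ1,
    ofReal_integral_eq_lintegral_ofReal
      (integrableOn_exp_neg_mul_earInnovTail hβ0.le hβ1.le a _)
      (ae_of_all _ fun x => mul_nonneg (exp_pos _).le (earInnovTail_nonneg hβ1.le _))]
  congr with x
  rw [ENNReal.ofReal_mul (exp_pos _).le]

lemma prod_expM_preimage_arReversal {β : ℝ} (hβ0 : 0 < β) (hβ1 : β < 1) (a b : ℝ) :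
    ((expM 1).prod (expM 1)) (arReversal β ⁻¹' (Ioi a ×ˢ Ioi b)) =
      ENNReal.ofReal (exp (-(max a (β * max b 0) + (1 - β) * max b 0))) := by
  rw [arReversal_preimage_Ioi_prod_Ioi hβ0 hβ1, Measure.prod_prod, expM_one_Ioi, expM_one_Ioi,
    ← ENNReal.ofReal_mul (exp_pos _).le, ← exp_add, mul_max_of_nonneg _ _ hβ0.le,
    mul_max_of_nonneg _ _ (sub_pos.2 hβ1).le, mul_zero, mul_zero, max_assoc]
  ring_nf

theorem map_arStep_eq_map_arReversal {β : ℝ} (hβ0 : 0 < β) (hβ1 : β < 1) :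
    ((expM 1).prod (earInnov β)).map (arStep β) =
      ((expM 1).prod (expM 1)).map (arReversal β) := by
  refine (Measure.ext_of_Ioi_prod_Ioi fun a b => ?_).symm
  rw [Measure.map_apply (measurable_arStep β) (measurableSet_Ioi.prod measurableSet_Ioi),
    Measure.map_apply (measurable_arReversal β) (measurableSet_Ioi.prod measurableSet_Ioi),
    prod_earInnov_preimage_arStep hβ0 hβ1, prod_expM_preimage_arReversal hβ0 hβ1]

/-- Time-reversal of the AR(1) kernel preserving `Exp(1)`: let `u, w` be independent `Exp(1)`
random variables, `ζ ~ Bernoulli(1-β)` independent of both, and `v = βu + ζw`.  Then the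
conditional law of `u` given `v` is the law of `min{v/β, η/(1-β)}` where `η ~ Exp(1)` is
independent of `v`.  We express this by saying that the joint law of `(v, u)` coincides with the
joint law of `(V, min{V/β, η/(1-β)})` for any independent `V, η ~ Exp(1)`. -/
theorem exp_ar_time_reversal {Ω : Type*} [MeasurableSpace Ω] (P : Measure Ω)
    [IsProbabilityMeasure P]
    {Ω' : Type*} [MeasurableSpace Ω'] (P' : Measure Ω') [IsProbabilityMeasure P']
    (β : ℝ) (hβ : β ∈ Set.Ioo (0:ℝ) 1)
    (u ζ w : Ω → ℝ) (hu : Measurable u) (hζ : Measurable ζ) (hw : Measurable w)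
    (hind : iIndepFun ![u, ζ, w] P)
    (hulaw : Measure.map u P = expM 1)
    (hζlaw : Measure.map ζ P = bernM (1 - β))
    (hwlaw : Measure.map w P = expM 1)
    (V η : Ω' → ℝ) (hV : Measurable V) (hη : Measurable η)
    (hind' : IndepFun V η P')
    (hVlaw : Measure.map V P' = expM 1) (hηlaw : Measure.map η P' = expM 1) :
    Measure.map (fun ω => (β * u ω + ζ ω * w ω, u ω)) P
      = Measure.map (fun ω' => (V ω', min (V ω' / β) (η ω' / (1 - β)))) P' := by
  obtain ⟨hβ0, hβ1⟩ := hβ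
  have hmeas : ∀ i, Measurable (![u, ζ, w] i) := by
    intro i; fin_cases i <;> assumption
  have hinnov : Measure.map (fun ω => ζ ω * w ω) P = earInnov β := by
    rw [map_mul_of_indepFun_bernM hζ hw (hind.indepFun (show (1 : Fin 3) ≠ 2 by decide)) hζlaw
      hwlaw, sub_sub_cancel, earInnov]
  have hstate : Measure.map (fun ω => (u ω, ζ ω * w ω)) P = (expM 1).prod (earInnov β) := by
    have hind_u : IndepFun u (fun ω => ζ ω * w ω) P :=
      (hind.indepFun_prodMk hmeas 1 2 0 (by decide) (by decide)).symm.comp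
        measurable_id (measurable_fst.mul measurable_snd)
    rw [(indepFun_iff_map_prod_eq_prod_map_map hu.aemeasurable (by fun_prop)).1 hind_u,
      hulaw, hinnov]
  have hrev : Measure.map (fun ω' => (V ω', η ω')) P' = (expM 1).prod (expM 1) := by
    rw [(indepFun_iff_map_prod_eq_prod_map_map hV.aemeasurable hη.aemeasurable).1 hind', hVlaw,
      hηlaw]
  calc Measure.map (fun ω => (β * u ω + ζ ω * w ω, u ω)) P
      = ((expM 1).prod (earInnov β)).map (arStep β) := by
        rw [← hstate, Measure.map_map (f := fun ω => (u ω, ζ ω * w ω)) (measurable_arStep β)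
          (by fun_prop)]
        rfl
    _ = ((expM 1).prod (expM 1)).map (arReversal β) := map_arStep_eq_map_arReversal hβ0 hβ1
    _ = Measure.map (fun ω' => (V ω', min (V ω' / β) (η ω' / (1 - β)))) P' := by
        rw [← hrev, Measure.map_map (measurable_arReversal β) (hV.prodMk hη)]
        rfl
end

section
/- Fix p > 0, σ > 0 and β ∈ (0,1). The function s ↦ (β² + (1-β²)/(1+(sσ)²))^p is the characteristic function of a probability measure on ℝ, namely the law of ξ_β - ξ'_β where ξ_β, ξ'_β are independent copies of the Gamma innovation, and if η_β has this law and η' ~ BK(p,σ) is independent, then βη' + η_β ~ BK(p, σ). -/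
/-!
By independence the characteristic function of `ξ_β - ξ'_β` is `φ(s) · conj φ(s) = ‖φ(s)‖²`,
where `φ(s) = ((1 - iβsσ) / (1 - isσ))^p`, so it equals
`((1 + (βsσ)²) / (1 + (sσ)²))^p = (β² + (1 - β²) / (1 + (sσ)²))^p`. Multiplying by the
characteristic function `(1 + (βsσ)²)^(-p)` of `βη'` cancels the numerator and leaves
`(1 + (sσ)²)^(-p)`.
-/

open MeasureTheory ProbabilityTheory Complex ComplexConjugate

namespace ProbabilityTheory

variable {Ω E : Type*} [MeasurableSpace Ω] {P : Measure Ω} [IsFiniteMeasure P]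
  [NormedAddCommGroup E] [InnerProductSpace ℝ E] [MeasurableSpace E]
  [BorelSpace E] [SecondCountableTopology E] {X Y : Ω → E}

lemma IndepFun.charFun_map_fun_smul_add (hX : AEMeasurable X P) (hY : AEMeasurable Y P)
    (hXY : X ⟂ᵢ[P] Y) (a : ℝ) (t : E) :
    charFun (P.map fun ω ↦ a • X ω + Y ω) t = charFun (P.map X) (a • t) * charFun (P.map Y) t := by
  have haXY : (fun ω ↦ a • X ω) ⟂ᵢ[P] Y := hXY.comp (measurable_const_smul a) measurable_id
  rw [haXY.charFun_map_fun_add_eq_mul (X := fun ω ↦ a • X ω) (hX.const_smul a) hY, Pi.mul_apply,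
    charFun_map_smul_comp hX]

lemma IndepFun.charFun_map_fun_sub (hX : AEMeasurable X P) (hY : AEMeasurable Y P)
    (hXY : X ⟂ᵢ[P] Y) (t : E) :
    charFun (P.map fun ω ↦ X ω - Y ω) t = charFun (P.map X) t * conj (charFun (P.map Y) t) := by
  have h := hXY.symm.charFun_map_fun_smul_add hY hX (-1) t
  simp only [neg_one_smul, neg_add_eq_sub, charFun_neg] at h
  rw [h, mul_comm]

end ProbabilityTheory

lemma integral_cexp_I_mul_eq_charFun {Ω : Type*} [MeasurableSpace Ω] {P : Measure Ω}
    {X : Ω → ℝ} (hX : AEMeasurable X P) (s : ℝ) :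
    ∫ ω, cexp (I * s * X ω) ∂P = charFun (P.map X) s := by
  rw [charFun_apply_real, integral_map hX (by fun_prop)]
  simp_rw [mul_comm I, mul_right_comm]

lemma norm_cpow_one_sub_I_mul_div_sq (p β t : ℝ) :
    ‖((1 - I * β * t) / (1 - I * t)) ^ (p : ℂ)‖ ^ 2 = ((1 + (β * t) ^ 2) / (1 + t ^ 2)) ^ p := by
  have normSq_one_sub (u : ℝ) : normSq (1 - I * u) = 1 + u ^ 2 := by
    simp [normSq_apply, sq]
  rw [norm_cpow_real, Real.rpow_pow_comm (norm_nonneg _), Complex.sq_norm, normSq_div,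
    mul_assoc, ← ofReal_mul, normSq_one_sub, normSq_one_sub]

lemma Real.rpow_neg_mul_div_rpow {a b : ℝ} (ha : 0 < a) (hb : 0 < b) (p : ℝ) :
    a ^ (-p) * (a / b) ^ p = b ^ (-p) := by
  rw [Real.div_rpow ha.le hb.le, Real.rpow_neg ha.le, Real.rpow_neg hb.le]
  field_simp

lemma sq_add_one_sub_sq_div (β t : ℝ) :
    β ^ 2 + (1 - β ^ 2) / (1 + t ^ 2) = (1 + (β * t) ^ 2) / (1 + t ^ 2) := by
  field_simp
  ring

theorem besselK_selfDecomposable_general {Ω : Type*} [MeasurableSpace Ω] (P : Measure Ω)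
    [IsProbabilityMeasure P]
    (p σ β : ℝ)
    (ξβ ξβ' η' : Ω → ℝ) (hξβ : Measurable ξβ) (hξβ' : Measurable ξβ') (hη' : Measurable η')
    (hind : iIndepFun ![ξβ, ξβ', η'] P)
    (hξβchar : ∀ s : ℝ, ∫ ω, Complex.exp (Complex.I * s * ξβ ω) ∂P
      = ((1 - Complex.I * β * s * σ) / (1 - Complex.I * s * σ)) ^ (p : ℂ))
    (hξβ'char : ∀ s : ℝ, ∫ ω, Complex.exp (Complex.I * s * ξβ' ω) ∂P
      = ((1 - Complex.I * β * s * σ) / (1 - Complex.I * s * σ)) ^ (p : ℂ))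
    (hη'char : ∀ s : ℝ, ∫ ω, Complex.exp (Complex.I * s * η' ω) ∂P
      = ((1 + (s * σ) ^ 2 : ℝ) ^ (-p) : ℝ)) :
    IsProbabilityMeasure (Measure.map (fun ω => ξβ ω - ξβ' ω) P) ∧
    (∀ s : ℝ, ∫ ω, Complex.exp (Complex.I * s * (ξβ ω - ξβ' ω)) ∂P
      = (((β ^ 2 + (1 - β ^ 2) / (1 + (s * σ) ^ 2)) ^ p : ℝ) : ℂ)) ∧
    (∀ s : ℝ, ∫ ω, Complex.exp (Complex.I * s * (β * η' ω + (ξβ ω - ξβ' ω))) ∂P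
      = ((1 + (s * σ) ^ 2 : ℝ) ^ (-p) : ℝ)) := by
  have hξξ' : ξβ ⟂ᵢ[P] ξβ' := hind.indepFun (i := 0) (j := 1) (by decide)
  have hη'ξξ' : η' ⟂ᵢ[P] fun ω ↦ ξβ ω - ξβ' ω :=
    (hind.indepFun_prodMk (fun i ↦ by fin_cases i <;> assumption) 0 1 2 (by decide)
      (by decide)).symm.comp measurable_id (measurable_fst.sub measurable_snd)
  have hdiff (s : ℝ) : charFun (P.map fun ω ↦ ξβ ω - ξβ' ω) s
      = (((β ^ 2 + (1 - β ^ 2) / (1 + (s * σ) ^ 2)) ^ p : ℝ) : ℂ) := by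
    rw [hξξ'.charFun_map_fun_sub hξβ.aemeasurable hξβ'.aemeasurable,
      ← integral_cexp_I_mul_eq_charFun hξβ.aemeasurable,
      ← integral_cexp_I_mul_eq_charFun hξβ'.aemeasurable, hξβchar, hξβ'char, mul_conj,
      ← Complex.sq_norm, sq_add_one_sub_sq_div, ← norm_cpow_one_sub_I_mul_div_sq p β (s * σ)]
    push_cast
    ring_nf
  refine ⟨Measure.isProbabilityMeasure_map (hξβ.sub hξβ').aemeasurable, fun s ↦ ?_, fun s ↦ ?_⟩
  · rw [← hdiff, ← integral_cexp_I_mul_eq_charFun (by fun_prop)]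
    simp only [ofReal_sub]
  · calc ∫ ω, cexp (I * s * (β * η' ω + (ξβ ω - ξβ' ω))) ∂P
        = charFun (P.map fun ω ↦ β * η' ω + (ξβ ω - ξβ' ω)) s := by
          rw [← integral_cexp_I_mul_eq_charFun (by fun_prop)]
          simp only [ofReal_add, ofReal_mul, ofReal_sub]
      _ = charFun (P.map η') (β * s) * charFun (P.map fun ω ↦ ξβ ω - ξβ' ω) s :=
          hη'ξξ'.charFun_map_fun_smul_add hη'.aemeasurable (hξβ.sub hξβ').aemeasurable β s
      _ = ((1 + (s * σ) ^ 2) ^ (-p) : ℝ) := by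
          rw [← integral_cexp_I_mul_eq_charFun hη'.aemeasurable, hη'char, hdiff,
            sq_add_one_sub_sq_div, ← ofReal_mul, mul_assoc,
            Real.rpow_neg_mul_div_rpow (by positivity) (by positivity)]

/-- Self-decomposability of the Bessel-K distribution and identification of its innovation
`BK_β(p,σ)`.  Let `ξ_β, ξ'_β` be independent copies of the gamma innovation, i.e. random
variables with characteristic function `((1-iβsσ)/(1-isσ))^p`, and let `η' ~ BK(p,σ)`
(characteristic function `(1+(sσ)²)^(-p)`) be independent of both.  Then:
* `η_β = ξ_β - ξ'_β` has law a probability measure with characteristic function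
  `s ↦ (β² + (1-β²)/(1+(sσ)²))^p`;
* `βη' + η_β ~ BK(p, σ)`. -/
theorem besselK_selfDecomposable {Ω : Type*} [MeasurableSpace Ω] (P : Measure Ω)
    [IsProbabilityMeasure P]
    (p σ β : ℝ) (hp : 0 < p) (hσ : 0 < σ) (hβ : β ∈ Set.Ioo (0:ℝ) 1)
    (ξβ ξβ' η' : Ω → ℝ) (hξβ : Measurable ξβ) (hξβ' : Measurable ξβ') (hη' : Measurable η')
    (hind : iIndepFun ![ξβ, ξβ', η'] P)
    (hξβchar : ∀ s : ℝ, ∫ ω, Complex.exp (Complex.I * s * ξβ ω) ∂P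
      = ((1 - Complex.I * β * s * σ) / (1 - Complex.I * s * σ)) ^ (p : ℂ))
    (hξβ'char : ∀ s : ℝ, ∫ ω, Complex.exp (Complex.I * s * ξβ' ω) ∂P
      = ((1 - Complex.I * β * s * σ) / (1 - Complex.I * s * σ)) ^ (p : ℂ))
    (hη'char : ∀ s : ℝ, ∫ ω, Complex.exp (Complex.I * s * η' ω) ∂P
      = ((1 + (s * σ) ^ 2 : ℝ) ^ (-p) : ℝ)) :
    IsProbabilityMeasure (Measure.map (fun ω => ξβ ω - ξβ' ω) P) ∧
    (∀ s : ℝ, ∫ ω, Complex.exp (Complex.I * s * (ξβ ω - ξβ' ω)) ∂P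
      = (((β ^ 2 + (1 - β ^ 2) / (1 + (s * σ) ^ 2)) ^ p : ℝ) : ℂ)) ∧
    (∀ s : ℝ, ∫ ω, Complex.exp (Complex.I * s * (β * η' ω + (ξβ ω - ξβ' ω))) ∂P
      = ((1 + (s * σ) ^ 2 : ℝ) ^ (-p) : ℝ)) :=
  besselK_selfDecomposable_general P p σ β ξβ ξβ' η' hξβ hξβ' hη' hind hξβchar hξβ'char hη'char
end

section
/- Let X be a separable Hilbert space with orthonormal basis {r_k}, let μ be the law of u = Σ_k γ_k ξ_k r_k with {ξ_k} independent real random variables with laws μ_k, {γ_k} ∈ ℝ decaying fast enough that ‖u‖_X < ∞ a.s. Suppose for each k, Q_k is a μ_k-reversible probability kernel on ℝ. Define the kernel Q on X by drawing ζ_k ~ Q_k(ξ_k, ·) independently and setting v = Σ_k γ_k ζ_k r_k. Then Q satisfies detailed balance with respect to μ, i.e., Q(u,dv)μ(du) = Q(v,du)μ(dv) as measures on X × X. -/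
open MeasureTheory ProbabilityTheory

/-!
Only the joint law of the coefficient pairs `(ξ_k, ζ_k)_k` matters: both sides are images of it
under the same measurable synthesis map `(a, b) ↦ (Σ γ_k a_k r_k, Σ γ_k b_k r_k)`, once with
every pair swapped. By independence that joint law is the product of the laws `μ_k ⊗ Q_k` of the
pairs, and reversibility of `Q_k` says precisely that each factor is invariant under the swap.
-/

namespace ProbabilityTheory

variable {ι Ω : Type*} [MeasurableSpace Ω] {P : Measure Ω}

lemma iIndepFun.map_fun_eq_of_map_eq {β : ι → Type*} [∀ i, MeasurableSpace (β i)]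
    {X Y : (i : ι) → Ω → β i} (hX : ∀ i, Measurable (X i)) (hY : ∀ i, Measurable (Y i))
    (hXind : iIndepFun X P) (hYind : iIndepFun Y P) (hlaw : ∀ i, P.map (X i) = P.map (Y i)) :
    P.map (fun ω i ↦ X i ω) = P.map (fun ω i ↦ Y i ω) := by
  rw [hXind.map_fun_eq_infinitePi_map hX, hYind.map_fun_eq_infinitePi_map hY, funext hlaw]

lemma iIndepFun.map_fun_swap_eq {α : Type*} [MeasurableSpace α] {X Y : ι → Ω → α}
    (hX : ∀ i, Measurable (X i)) (hY : ∀ i, Measurable (Y i))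
    (hind : iIndepFun (fun i ω ↦ (X i ω, Y i ω)) P)
    (hsymm : ∀ i, (P.map fun ω ↦ (X i ω, Y i ω)).map Prod.swap = P.map fun ω ↦ (X i ω, Y i ω)) :
    P.map (fun ω i ↦ (Y i ω, X i ω)) = P.map (fun ω i ↦ (X i ω, Y i ω)) := by
  refine iIndepFun.map_fun_eq_of_map_eq (fun i ↦ (hY i).prodMk (hX i))
    (fun i ↦ (hX i).prodMk (hY i)) (hind.comp (fun _ ↦ Prod.swap) fun _ ↦ measurable_swap)
    hind fun i ↦ ?_
  rw [← hsymm i, Measure.map_map measurable_swap ((hX i).prodMk (hY i))]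
  rfl

end ProbabilityTheory

theorem product_kernel_detailed_balance_general {Ω : Type*} [MeasurableSpace Ω] (P : Measure Ω)
    {X : Type*} [NormedAddCommGroup X] [InnerProductSpace ℝ X] [CompleteSpace X]
    [SecondCountableTopology X] [MeasurableSpace X] [BorelSpace X]
    (r : ℕ → X) (γ : ℕ → ℝ)
    (μk : ℕ → Measure ℝ)
    (Qk : ℕ → Kernel ℝ ℝ)
    (hrev : ∀ k, ((μk k).compProd (Qk k)).map Prod.swap = (μk k).compProd (Qk k))
    (ξ ζ : ℕ → Ω → ℝ) (hξ : ∀ k, Measurable (ξ k)) (hζ : ∀ k, Measurable (ζ k))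
    (hpairs : iIndepFun (fun k ω => (ξ k ω, ζ k ω)) P)
    (hjoint : ∀ k, Measure.map (fun ω => (ξ k ω, ζ k ω)) P = (μk k).compProd (Qk k)) :
    Measure.map
        (fun ω => ((∑' k, (γ k * ξ k ω) • r k, ∑' k, (γ k * ζ k ω) • r k) : X × X)) P
      = Measure.map
          (fun ω => ((∑' k, (γ k * ζ k ω) • r k, ∑' k, (γ k * ξ k ω) • r k) : X × X)) P := by
  let synth : (ℕ → ℝ × ℝ) → X × X :=
    fun x ↦ (∑' k, (γ k * (x k).1) • r k, ∑' k, (γ k * (x k).2) • r k)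
  have hsynth : Measurable synth := by fun_prop
  have hpairs_law : P.map (fun ω k ↦ (ζ k ω, ξ k ω)) = P.map (fun ω k ↦ (ξ k ω, ζ k ω)) :=
    hpairs.map_fun_swap_eq hξ hζ fun k ↦ by rw [hjoint k, hrev k]
  calc P.map (synth ∘ fun ω k ↦ (ξ k ω, ζ k ω))
      = (P.map fun ω k ↦ (ξ k ω, ζ k ω)).map synth :=
        (Measure.map_map hsynth (measurable_pi_lambda _ fun k ↦ (hξ k).prodMk (hζ k))).symm
    _ = (P.map fun ω k ↦ (ζ k ω, ξ k ω)).map synth := by rw [hpairs_law]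
    _ = P.map (synth ∘ fun ω k ↦ (ζ k ω, ξ k ω)) :=
        Measure.map_map hsynth (measurable_pi_lambda _ fun k ↦ (hζ k).prodMk (hξ k))

/-- Detailed balance of the product proposal kernel with respect to a product prior on a
separable Hilbert space `X` with orthonormal basis `{r_k}`.  Let `μ` be the law of
`u = Σ_k γ_k ξ_k r_k` where the `ξ_k` are independent with laws `μ_k` and the series converges
a.s.  Suppose each `Q_k` is a `μ_k`-reversible Markov kernel on `ℝ`, and `v = Σ_k γ_k ζ_k r_k`
where, independently across `k`, `ζ_k ~ Q_k(ξ_k, ·)` (i.e. `(ξ_k, ζ_k)` has law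
`μ_k ⊗ₘ Q_k`).  Then the kernel `Q(u, dv)` thus defined satisfies detailed balance with
respect to `μ`:  the measure `Q(u,dv)μ(du)`, which is the joint law of `(u,v)`, is symmetric
under the swap `(u,v) ↦ (v,u)`. -/
theorem product_kernel_detailed_balance {Ω : Type*} [MeasurableSpace Ω] (P : Measure Ω)
    [IsProbabilityMeasure P]
    {X : Type*} [NormedAddCommGroup X] [InnerProductSpace ℝ X] [CompleteSpace X]
    [SecondCountableTopology X] [MeasurableSpace X] [BorelSpace X]
    (r : ℕ → X) (hr : Orthonormal ℝ r) (γ : ℕ → ℝ)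
    (μk : ℕ → Measure ℝ) (hμk : ∀ k, IsProbabilityMeasure (μk k))
    (Qk : ℕ → Kernel ℝ ℝ) (hQk : ∀ k, IsMarkovKernel (Qk k))
    (hrev : ∀ k, ((μk k).compProd (Qk k)).map Prod.swap = (μk k).compProd (Qk k))
    (ξ ζ : ℕ → Ω → ℝ) (hξ : ∀ k, Measurable (ξ k)) (hζ : ∀ k, Measurable (ζ k))
    (hpairs : iIndepFun (fun k ω => (ξ k ω, ζ k ω)) P)
    (hjoint : ∀ k, Measure.map (fun ω => (ξ k ω, ζ k ω)) P = (μk k).compProd (Qk k))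
    (hconv : ∀ᵐ ω ∂P, Summable (fun k => (γ k * ξ k ω) • r k) ∧
      Summable (fun k => (γ k * ζ k ω) • r k)) :
    Measure.map
        (fun ω => ((∑' k, (γ k * ξ k ω) • r k, ∑' k, (γ k * ζ k ω) • r k) : X × X)) P
      = Measure.map
          (fun ω => ((∑' k, (γ k * ζ k ω) • r k, ∑' k, (γ k * ξ k ω) • r k) : X × X)) P :=
  product_kernel_detailed_balance_general P r γ μk Qk hrev ξ ζ hξ hζ hpairs hjoint
end

section
/- Let X be a separable Hilbert space, μ ∈ P(X), and let Q be a probability kernel on X reversible with respect to μ, i.e., Q(u,dv)μ(du) = Q(v,du)μ(dv). Let Ψ: X → ℝ be continuous and locally bounded, let ν be defined by dν/dμ(u) = Z^{-1} exp(-Ψ(u)) with Z = ∫ exp(-Ψ) dμ ∈ (0,∞), and define τ(A) = ∫ Q(u, A_u) dν(u) and τ^⊥(A) = ∫ Q(u, A_u^⊥) dν(u) for Borel A ⊆ X × X, where A_u = {v : (u,v) ∈ A} and A^⊥ = {(u,v) : (v,u) ∈ A}. Then τ^⊥ is absolutely continuous with respect to τ with Radon–Nikodym derivative (u,v) ↦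 exp(Ψ(u) - Ψ(v)). -/
/-!
Write `ρ = μ ⊗ₘ Q` and `w u = Z⁻¹ exp(-Ψ u)`, so that `τ = w(u) ρ(du,dv)`. Reversibility says
that `ρ` is invariant under the swap, hence `τ^⊥ = w(v) ρ(du,dv)`. The ratio of the two densities
with respect to `ρ` is `w(v) / w(u) = exp(Ψ(u) - Ψ(v))`.
-/

open MeasureTheory ProbabilityTheory
open scoped ENNReal

namespace MeasureTheory.Measure

variable {α β : Type*} [MeasurableSpace α] [MeasurableSpace β]

lemma withDensity_compProd {μ : Measure α} [SFinite μ] {κ : Kernel α β} [IsSFiniteKernel κ]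
    {g : α → ℝ≥0∞} (hg : Measurable g) :
    (μ.withDensity g) ⊗ₘ κ = (μ ⊗ₘ κ).withDensity (fun p => g p.1) := by
  ext s hs
  have hg₁ : Measurable fun p : α × β => g p.1 := hg.comp measurable_fst
  rw [compProd_apply hs, withDensity_apply _ hs, ← lintegral_indicator hs,
    lintegral_withDensity_eq_lintegral_mul _ hg (Kernel.measurable_kernel_prodMk_left hs),
    lintegral_compProd (hg₁.indicator hs)]
  congr 1 with a
  simp_rw [← Set.indicator_comp_right (Prod.mk a)]
  exact (lintegral_indicator_const (measurable_prodMk_left hs) (g a)).symm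

lemma map_withDensity_comp {f : α → β} (hf : Measurable f) (m : Measure α)
    {h : β → ℝ≥0∞} (hh : Measurable h) :
    (m.withDensity (h ∘ f)).map f = (m.map f).withDensity h := by
  ext s hs
  rw [map_apply hf hs, withDensity_apply _ (hf hs), withDensity_apply _ hs,
    setLIntegral_map hs hh hf]
  rfl

variable {ρ : Measure (α × α)} {w : α → ℝ≥0∞}

lemma map_swap_withDensity_fst (hρ : ρ.map Prod.swap = ρ) (hw : Measurable w) :
    (ρ.withDensity (fun p => w p.1)).map Prod.swap = ρ.withDensity (fun p => w p.2) := by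
  calc (ρ.withDensity (fun p => w p.1)).map Prod.swap
      = (ρ.withDensity ((fun p => w p.2) ∘ Prod.swap)).map Prod.swap := rfl
    _ = ρ.withDensity (fun p => w p.2) := by
      have hw₂ : Measurable fun p : α × α => w p.2 := hw.comp measurable_snd
      rw [map_withDensity_comp measurable_swap ρ hw₂, hρ]

lemma map_swap_withDensity_fst_eq_withDensity (hρ : ρ.map Prod.swap = ρ) (hw : Measurable w)
    {r : α × α → ℝ≥0∞} (hr : Measurable r) (hwr : ∀ u v, w u * r (u, v) = w v) :
    (ρ.withDensity (fun p => w p.1)).map Prod.swap =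
      (ρ.withDensity (fun p => w p.1)).withDensity r := by
  have hw₁ : Measurable fun p : α × α => w p.1 := hw.comp measurable_fst
  rw [map_swap_withDensity_fst hρ hw, ← withDensity_mul _ hw₁ hr]
  exact congrArg ρ.withDensity (funext fun p => (hwr p.1 p.2).symm)

end MeasureTheory.Measure

lemma ENNReal.ofReal_mul_exp_neg_mul_ofReal_exp_sub (c a b : ℝ) :
    ENNReal.ofReal (c * Real.exp (-a)) * ENNReal.ofReal (Real.exp (a - b)) =
      ENNReal.ofReal (c * Real.exp (-b)) := by
  rw [← ENNReal.ofReal_mul' (Real.exp_nonneg _), mul_assoc, ← Real.exp_add]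
  ring_nf

theorem prior_reversible_acceptance_ratio_general
    {X : Type*} [NormedAddCommGroup X]
    [MeasurableSpace X] [BorelSpace X]
    (μ : Measure X) [IsProbabilityMeasure μ]
    (Q : Kernel X X) [IsMarkovKernel Q]
    (hrev : (μ.compProd Q).map Prod.swap = μ.compProd Q)
    (Ψ : X → ℝ) (hΨcont : Continuous Ψ)
    (Z : ℝ)
    (ν : Measure X)
    (hν : ν = μ.withDensity (fun u => ENNReal.ofReal (Z⁻¹ * Real.exp (-Ψ u))))
    (τ τperp : Measure (X × X))
    (hτ : τ = ν.compProd Q) (hτperp : τperp = τ.map Prod.swap) :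
    τperp ≪ τ ∧
      τperp = τ.withDensity (fun uv => ENNReal.ofReal (Real.exp (Ψ uv.1 - Ψ uv.2))) := by
  have hΨ : Measurable Ψ := hΨcont.measurable
  have hw : Measurable fun u => ENNReal.ofReal (Z⁻¹ * Real.exp (-Ψ u)) := by fun_prop
  have hr : Measurable fun uv : X × X => ENNReal.ofReal (Real.exp (Ψ uv.1 - Ψ uv.2)) := by
    fun_prop
  have hτperp_eq : τperp = τ.withDensity
      (fun uv => ENNReal.ofReal (Real.exp (Ψ uv.1 - Ψ uv.2))) := by
    rw [hτperp, hτ, hν, Measure.withDensity_compProd hw]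
    exact Measure.map_swap_withDensity_fst_eq_withDensity hrev hw hr fun u v =>
      ENNReal.ofReal_mul_exp_neg_mul_ofReal_exp_sub _ _ _
  exact ⟨hτperp_eq ▸ withDensity_absolutelyContinuous τ _, hτperp_eq⟩

/-- Tierney's theorem for prior-reversible proposals.  Let `X` be a separable Hilbert space,
`μ` a Borel probability measure on `X`, and `Q` a Markov kernel reversible with respect to `μ`
(i.e. `Q(u,dv)μ(du) = Q(v,du)μ(dv)` as measures on `X × X`).  Let `Ψ : X → ℝ` be continuous
and locally bounded, let `ν` be defined by `dν/dμ(u) = Z⁻¹ exp(-Ψ(u))` with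
`Z = ∫ exp(-Ψ) dμ ∈ (0,∞)`, and set `τ = ν(du) Q(u,dv)` and `τ^⊥` its image under the swap
`(u,v) ↦ (v,u)`.  Then `τ^⊥ ≪ τ` with Radon–Nikodym derivative
`(u,v) ↦ exp(Ψ(u) - Ψ(v))`. -/
theorem prior_reversible_acceptance_ratio
    {X : Type*} [NormedAddCommGroup X] [InnerProductSpace ℝ X] [CompleteSpace X]
    [SecondCountableTopology X] [MeasurableSpace X] [BorelSpace X]
    (μ : Measure X) [IsProbabilityMeasure μ]
    (Q : Kernel X X) [IsMarkovKernel Q]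
    (hrev : (μ.compProd Q).map Prod.swap = μ.compProd Q)
    (Ψ : X → ℝ) (hΨcont : Continuous Ψ)
    (hΨloc : ∀ x : X, ∃ s ∈ nhds x, ∃ C : ℝ, ∀ y ∈ s, |Ψ y| ≤ C)
    (hint : MeasureTheory.Integrable (fun u => Real.exp (-Ψ u)) μ)
    (Z : ℝ) (hZ : Z = ∫ u, Real.exp (-Ψ u) ∂μ) (hZpos : 0 < Z)
    (ν : Measure X)
    (hν : ν = μ.withDensity (fun u => ENNReal.ofReal (Z⁻¹ * Real.exp (-Ψ u))))
    (τ τperp : Measure (X × X))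
    (hτ : τ = ν.compProd Q) (hτperp : τperp = τ.map Prod.swap) :
    τperp ≪ τ ∧
      τperp = τ.withDensity (fun uv => ENNReal.ofReal (Real.exp (Ψ uv.1 - Ψ uv.2))) :=
  prior_reversible_acceptance_ratio_general μ Q hrev Ψ hΨcont Z ν hν τ τperp hτ hτperp
end
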